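/- For all CN-formulas φ, ψ: (1) φ □→ ψ ∈ CnCK_R if and only if φ → ψ ∈ CnCK_R; (2) φ ◇→ ψ ∉ CnCK_R. -/

import Mathlib

/-- Formulas of the conditional language CN. -/
inductive CNForm : Type
  | atom : ℕ → CNForm
  | conj : CNForm → CNForm → CNForm
  | disj : CNForm → CNForm → CNForm
  | impl : CNForm → CNForm → CNForm
  | neg  : CNForm → CNForm
  | boxto : CNForm → CNForm → CNForm
  | diato : CNForm → CNForm → CNForm

/-- A Fischer–Servi conditional model. -/
structure FSCModel where
  W : Type
  nonempty : Nonempty W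
  le : W → W → Prop
  le_refl : ∀ w, le w w
  le_trans : ∀ {w v u}, le w v → le v u → le w u
  R : W → Set W × Set W → W → Prop
  fs1 : ∀ {w w' v} (XY : Set W × Set W), le w w' → R w XY v → ∃ v', R w' XY v' ∧ le v v'
  fs2 : ∀ {w v v'} (XY : Set W × Set W), R w XY v → le v v' → ∃ w', le w w' ∧ R w' XY v'
  Vpos : ℕ → W → Prop
  Vneg : ℕ → W → Prop
  Vpos_mono : ∀ (p : ℕ) {w v}, le w v → Vpos p w → Vpos p v
  Vneg_mono : ∀ (p : ℕ) {w v}, le w v → Vneg p w → Vneg p v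

/-- `M.sat true φ w` is verification `M,w ⊨⁺ φ`; `M.sat false φ w` is falsification `M,w ⊨⁻ φ`.
In the conditional clauses, the accessibility relation is indexed by the bi-extension
`({x | M,x ⊨⁺ ψ}, {x | M,x ⊨⁻ ψ})` of the antecedent ψ. -/
def FSCModel.sat (M : FSCModel) : Bool → CNForm → M.W → Prop
  | true,  .atom p,   w => M.Vpos p w
  | false, .atom p,   w => M.Vneg p w
  | true,  .conj φ ψ, w => M.sat true φ w ∧ M.sat true ψ w
  | false, .conj φ ψ, w => M.sat false φ w ∨ M.sat false ψ w
  | true,  .disj φ ψ, w => M.sat true φ w ∨ M.sat true ψ w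
  | false, .disj φ ψ, w => M.sat false φ w ∧ M.sat false ψ w
  | true,  .impl φ ψ, w => ∀ v, M.le w v → M.sat true φ v → M.sat true ψ v
  | false, .impl φ ψ, w => ∀ v, M.le w v → M.sat true φ v → M.sat false ψ v
  | true,  .neg φ,    w => M.sat false φ w
  | false, .neg φ,    w => M.sat true φ w
  | true,  .boxto ψ χ, w => ∀ v, M.le w v → ∀ u,
      M.R v ({x | M.sat true ψ x}, {x | M.sat false ψ x}) u → M.sat true χ u
  | false, .boxto ψ χ, w => ∀ v, M.le w v → ∀ u,
      M.R v ({x | M.sat true ψ x}, {x | M.sat false ψ x}) u → M.sat false χ u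
  | true,  .diato ψ χ, w => ∃ u,
      M.R w ({x | M.sat true ψ x}, {x | M.sat false ψ x}) u ∧ M.sat true χ u
  | false, .diato ψ χ, w => ∃ u,
      M.R w ({x | M.sat true ψ x}, {x | M.sat false ψ x}) u ∧ M.sat false χ u

/-- CnCK-validity: `φ ∈ CnCK`. -/
def CnCKvalid (φ : CNForm) : Prop :=
  ∀ (M : FSCModel) (w : M.W), M.sat true φ w

/-- The consequence relation of the logic CnCK: `Γ ⊨_CnCK Δ`. -/
def CnCKconseq (Γ Δ : Set CNForm) : Prop :=
  ∀ (M : FSCModel) (w : M.W), (∀ γ ∈ Γ, M.sat true γ w) → ∃ δ ∈ Δ, M.sat true δ w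

/-- A Fischer–Servi conditional model is reflexive iff `R(w,(X,Y),v)` implies `v ∈ X`. -/
def FSCModel.Reflexive (M : FSCModel) : Prop :=
  ∀ {w v : M.W} (XY : Set M.W × Set M.W), M.R w XY v → v ∈ XY.1

/-- CnCK_R-validity: `φ ∈ CnCK_R`. -/
def CnCKRvalid (φ : CNForm) : Prop :=
  ∀ (M : FSCModel), M.Reflexive → ∀ w : M.W, M.sat true φ w

/-- The consequence relation of the logic CnCK_R: `Γ ⊨_{CnCK_R} Δ`. -/
def CnCKRconseq (Γ Δ : Set CNForm) : Prop :=
  ∀ (M : FSCModel), M.Reflexive → ∀ w : M.W,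
    (∀ γ ∈ Γ, M.sat true γ w) → ∃ δ ∈ Δ, M.sat true δ w


/-- Persistence: satisfaction is monotone along `le`. -/
lemma FSCModel.persist (M : FSCModel) (χ : CNForm) :
    ∀ (b : Bool) {w v : M.W}, M.le w v → M.sat b χ w → M.sat b χ v := by
  induction χ with
  | atom p =>
      intro b w v h hs
      cases b
      · exact M.Vneg_mono p h hs
      · exact M.Vpos_mono p h hs
  | conj φ ψ ihφ ihψ =>
      intro b w v h hs
      cases b
      · exact hs.imp (ihφ false h) (ihψ false h)
      · exact ⟨ihφ true h hs.1, ihψ true h hs.2⟩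
  | disj φ ψ ihφ ihψ =>
      intro b w v h hs
      cases b
      · exact ⟨ihφ false h hs.1, ihψ false h hs.2⟩
      · exact hs.imp (ihφ true h) (ihψ true h)
  | impl φ ψ ihφ ihψ =>
      intro b w v h hs
      cases b
      · exact fun u hu hφ => hs u (M.le_trans h hu) hφ
      · exact fun u hu hφ => hs u (M.le_trans h hu) hφ
  | neg φ ihφ =>
      intro b w v h hs
      cases b
      · exact ihφ true h hs
      · exact ihφ false h hs
  | boxto φ ψ ihφ ihψ =>
      intro b w v h hs
      cases b
      · exact fun u hu x hx => hs u (M.le_trans h hu) x hx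
      · exact fun u hu x hx => hs u (M.le_trans h hu) x hx
  | diato φ ψ ihφ ihψ =>
      intro b w v h hs
      cases b
      · obtain ⟨u, hR, hu⟩ := hs
        obtain ⟨u', hR', huu'⟩ := M.fs1 _ h hR
        exact ⟨u', hR', ihψ false huu' hu⟩
      · obtain ⟨u, hR, hu⟩ := hs
        obtain ⟨u', hR', huu'⟩ := M.fs1 _ h hR
        exact ⟨u', hR', ihψ true huu' hu⟩

/-- order on the extended model -/
def extLe (M : FSCModel) : (M.W ⊕ Unit) → (M.W ⊕ Unit) → Prop
  | .inl a, .inl b => M.le a b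
  | .inr _, .inr _ => True
  | _, _ => False

/-- accessibility on the extended model -/
def extR (M : FSCModel) : (M.W ⊕ Unit) → Set (M.W ⊕ Unit) × Set (M.W ⊕ Unit) → (M.W ⊕ Unit) → Prop
  | .inl a, XY, .inl b => M.R a ({x | Sum.inl x ∈ XY.1}, {x | Sum.inl x ∈ XY.2}) b
  | .inl _, _, .inr _ => False
  | .inr _, XY, v => v ∈ XY.1 ∧ ∀ x y, extLe M x y → x ∈ XY.1 → y ∈ XY.1

/-- Extension of a model `M` with one extra world `inr ()`, incomparable to the old worlds,
from which `R` reaches exactly the members of upward-closed first components. -/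
def extModel (M : FSCModel) : FSCModel where
  W := M.W ⊕ Unit
  nonempty := ⟨Sum.inr ()⟩
  le := extLe M
  le_refl w := by cases w <;> simp [extLe, M.le_refl]
  le_trans {w v u} h1 h2 := by
    cases w <;> cases v <;> cases u <;> simp_all [extLe]
    exact M.le_trans h1 h2
  R := extR M
  fs1 {w w' v} XY h hR := by
    match w, w' with
    | .inl w, .inl w' =>
        match v with
        | .inl v =>
            obtain ⟨v', hv', hle⟩ := M.fs1 _ h hR
            exact ⟨Sum.inl v', hv', hle⟩
        | .inr v => exact hR.elim
    | .inl w, .inr w' => exact h.elim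
    | .inr w, .inl w' => exact h.elim
    | .inr w, .inr w' =>
        refine ⟨v, hR, ?_⟩
        cases v with
        | inl v => exact M.le_refl v
        | inr v => trivial
  fs2 {w v v'} XY hR h := by
    match w, v, v' with
    | .inl w, .inl v, .inl v' =>
        obtain ⟨w', hw', hR'⟩ := M.fs2 _ hR h
        exact ⟨Sum.inl w', hw', hR'⟩
    | .inl w, .inl v, .inr v' => exact h.elim
    | .inl w, .inr v, v' => exact hR.elim
    | .inr w, v, v' => exact ⟨Sum.inr w, trivial, hR.2 _ _ h hR.1, hR.2⟩
  Vpos p w := match w with | .inl w => M.Vpos p w | .inr _ => False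
  Vneg p w := match w with | .inl w => M.Vneg p w | .inr _ => False
  Vpos_mono p {w v} h := by cases w <;> cases v <;> simp_all [extLe]; exact M.Vpos_mono p h
  Vneg_mono p {w v} h := by cases w <;> cases v <;> simp_all [extLe]; exact M.Vneg_mono p h

/-- Satisfaction on old worlds of the extended model agrees with `M`. -/
lemma extModel_sat (M : FSCModel) (χ : CNForm) :
    ∀ (b : Bool) (w : M.W), (extModel M).sat b χ (Sum.inl w) ↔ M.sat b χ w := by
  induction χ with
  | atom p =>
      intro b w; cases b <;> simp [FSCModel.sat, extModel]
  | conj φ ψ ihφ ihψ =>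
      intro b w; cases b <;> simp [FSCModel.sat, ihφ, ihψ]
  | disj φ ψ ihφ ihψ =>
      intro b w; cases b <;> simp [FSCModel.sat, ihφ, ihψ]
  | impl φ ψ ihφ ihψ =>
      intro b w
      have key : ∀ (b' : Bool),
          ((∀ v, (extModel M).le (Sum.inl w) v → (extModel M).sat true φ v → (extModel M).sat b' ψ v) ↔
           (∀ v, M.le w v → M.sat true φ v → M.sat b' ψ v)) := by
        intro b'
        constructor
        · intro h v hv hφ
          exact (ihψ b' v).1 (h (Sum.inl v) hv ((ihφ true v).2 hφ))
        · intro h v hv hφ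
          cases v with
          | inl v => exact (ihψ b' v).2 (h v hv ((ihφ true v).1 hφ))
          | inr v => exact absurd hv (by simp [extModel, extLe])
      cases b
      · exact key false
      · exact key true
  | neg φ ihφ =>
      intro b w; cases b
      · exact ihφ true w
      · exact ihφ false w
  | boxto φ ψ ihφ ihψ =>
      intro b w
      have hset1 : {x | Sum.inl x ∈ {y | (extModel M).sat true φ y}} = {x | M.sat true φ x} := by
        ext x; exact ihφ true x
      have hset2 : {x | Sum.inl x ∈ {y | (extModel M).sat false φ y}} = {x | M.sat false φ x} := by
        ext x; exact ihφ false x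
      have key : ∀ (b' : Bool),
          ((∀ v, (extModel M).le (Sum.inl w) v → ∀ u,
              (extModel M).R v ({x | (extModel M).sat true φ x}, {x | (extModel M).sat false φ x}) u →
              (extModel M).sat b' ψ u) ↔
           (∀ v, M.le w v → ∀ u,
              M.R v ({x | M.sat true φ x}, {x | M.sat false φ x}) u → M.sat b' ψ u)) := by
        intro b'
        constructor
        · intro h v hv u hu
          refine (ihψ b' u).1 (h (Sum.inl v) hv (Sum.inl u) ?_)
          show M.R v ({x | Sum.inl x ∈ {y | (extModel M).sat true φ y}},
            {x | Sum.inl x ∈ {y | (extModel M).sat false φ y}}) u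
          rw [hset1, hset2]
          exact hu
        · intro h v hv u hu
          cases v with
          | inl v =>
              cases u with
              | inl u =>
                  have hu' : extR M (Sum.inl v) _ (Sum.inl u) := hu
                  simp only [extR, hset1, hset2] at hu'
                  exact (ihψ b' u).2 (h v hv u (by rw [← hset1, ← hset2]; exact hu'))
              | inr u => exact absurd hu (by simp [extModel, extR])
          | inr v => exact absurd hv (by simp [extModel, extLe])
      cases b
      · exact key false
      · exact key true
  | diato φ ψ ihφ ihψ =>
      intro b w
      have hset1 : {x | Sum.inl x ∈ {y | (extModel M).sat true φ y}} = {x | M.sat true φ x} := by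
        ext x; exact ihφ true x
      have hset2 : {x | Sum.inl x ∈ {y | (extModel M).sat false φ y}} = {x | M.sat false φ x} := by
        ext x; exact ihφ false x
      have key : ∀ (b' : Bool),
          ((∃ u, (extModel M).R (Sum.inl w)
              ({x | (extModel M).sat true φ x}, {x | (extModel M).sat false φ x}) u ∧
              (extModel M).sat b' ψ u) ↔
           (∃ u, M.R w ({x | M.sat true φ x}, {x | M.sat false φ x}) u ∧ M.sat b' ψ u)) := by
        intro b'
        constructor
        · rintro ⟨u, hu, hψu⟩
          cases u with
          | inl u =>
              have hu' : extR M (Sum.inl w) _ (Sum.inl u) := hu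
              simp only [extR, hset1, hset2] at hu'
              exact ⟨u, (by rw [← hset1, ← hset2]; exact hu'), (ihψ b' u).1 hψu⟩
          | inr u => exact absurd hu (by simp [extModel, extR])
        · rintro ⟨u, hu, hψu⟩
          refine ⟨Sum.inl u, ?_, (ihψ b' u).2 hψu⟩
          show M.R w ({x | Sum.inl x ∈ {y | (extModel M).sat true φ y}},
            {x | Sum.inl x ∈ {y | (extModel M).sat false φ y}}) u
          rw [hset1, hset2]
          exact hu
      cases b
      · exact key false
      · exact key true

/-- The extended model is reflexive if `M` is. -/
lemma extModel_refl (M : FSCModel) (hM : M.Reflexive) : (extModel M).Reflexive := by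
  intro w v XY hR
  cases w with
  | inl w =>
      cases v with
      | inl v => exact hM _ hR
      | inr v => exact absurd hR (by simp [extModel, extR])
  | inr w => exact hR.1

/-- A trivial reflexive model with empty accessibility relation. -/
def trivModel : FSCModel where
  W := Unit
  nonempty := ⟨()⟩
  le _ _ := True
  le_refl _ := trivial
  le_trans _ _ := trivial
  R _ _ _ := False
  fs1 _ _ h := h.elim
  fs2 _ h _ := h.elim
  Vpos _ _ := False
  Vneg _ _ := False
  Vpos_mono := by intro _ _ _ _ h; exact h
  Vneg_mono := by intro _ _ _ _ h; exact h

lemma trivModel_refl : trivModel.Reflexive := fun _ h => h.elim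

/-- in CnCK_R, φ □→ ψ is valid iff φ → ψ is; no might-conditional is valid. -/
theorem CnCKR_boxto_diato_validity (φ ψ : CNForm) :
    (CnCKRvalid (CNForm.boxto φ ψ) ↔ CnCKRvalid (CNForm.impl φ ψ)) ∧
    ¬ CnCKRvalid (CNForm.diato φ ψ) := by
  constructor
  · constructor
    · intro hbox M hM w
      intro v hv hφ
      -- use the extended model, evaluating `boxto` at the new world
      have h := hbox (extModel M) (extModel_refl M hM) (Sum.inr ())
      have hR : (extModel M).R (Sum.inr ())
          ({x | (extModel M).sat true φ x}, {x | (extModel M).sat false φ x}) (Sum.inl v) := by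
        refine ⟨(extModel_sat M φ true v).2 hφ, ?_⟩
        intro x y hxy hx
        exact (extModel M).persist φ true hxy hx
      have := h (Sum.inr ()) (by simp [extModel, extLe]) (Sum.inl v) hR
      exact (extModel_sat M ψ true v).1 this
    · intro himpl M hM w
      intro v hv u hu
      have hφu : M.sat true φ u := hM _ hu
      exact himpl M hM u u (M.le_refl u) hφu
  · intro h
    have := h trivModel trivModel_refl ()
    obtain ⟨u, hu, -⟩ := this
    exact hu
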